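/- For every real x with 0 < x ≤ 11/40 one has (9π/5)x² − 2√2·π·x³ − (4π/5)x⁴ − 8√2·π·x⁵ − (144/5)x⁶ − 19487171·x⁷/(31250·(5 − 11x)) > 0 (note 5 − 11x > 0 for x ≤ 11/40). -/

import Mathlib

/-!
Dividing by `x²` leaves `uDivSq x`, in which every term after the constant `9π/5` is subtracted
and increasing in `x` on `[0, 5/11)`. Hence `uDivSq` is antitone there, and it suffices to check
`uDivSq (11/40) > 0`, which follows from `π > 3.14` and `√2 < 1.415`.
-/

open Real

noncomputable def uDivSq (x : ℝ) : ℝ :=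
  9 * π / 5 - 2 * √2 * π * x - (4 * π / 5) * x ^ 2 - 8 * √2 * π * x ^ 3 - (144 / 5) * x ^ 4
    - 19487171 * x ^ 5 / (31250 * (5 - 11 * x))

theorem uDivSq_antitoneOn : AntitoneOn uDivSq (Set.Ico 0 (5 / 11)) := by
  rintro x ⟨hx0, -⟩ y ⟨-, hy⟩ hxy
  have hy0 : 0 ≤ y := hx0.trans hxy
  unfold uDivSq
  gcongr
  linarith

theorem uDivSq_pos_at : 0 < uDivSq (11 / 40) := by
  have hπ : 3.14 < π := by linarith [pi_gt_d2]
  have hsqrt2 : √2 < 1.415 := by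
    rw [sqrt_lt' (by norm_num)]
    norm_num
  have hsqrt2π : √2 * π < 1.415 * π := by gcongr
  unfold uDivSq
  norm_num
  nlinarith

theorem statement19 (x : ℝ) (hx0 : 0 < x) (hx : x ≤ 11 / 40) :
    0 < (9 * π / 5) * x ^ 2 - 2 * Real.sqrt 2 * π * x ^ 3 - (4 * π / 5) * x ^ 4
        - 8 * Real.sqrt 2 * π * x ^ 5 - (144 / 5) * x ^ 6
        - 19487171 * x ^ 7 / (31250 * (5 - 11 * x)) := by
  have hle : uDivSq (11 / 40) ≤ uDivSq x :=
    uDivSq_antitoneOn ⟨hx0.le, by linarith⟩ ⟨by norm_num, by norm_num⟩ hx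
  calc 0 < x ^ 2 * uDivSq x := mul_pos (pow_pos hx0 2) (uDivSq_pos_at.trans_le hle)
    _ = _ := by unfold uDivSq; ring
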